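/- arXiv:2407.19446 — 3 statements merged into one kernel-verified Lean document; each statement's English description precedes it below -/
import Mathlib

section
/- Let Ω ⊆ [n]×[n] be an index set, L* ∈ ℝ^{n×n}, S* ∈ ℝ^{n×n}, and let Ω_{S*} = {(i,j) ∈ Ω : S*_{ij} ≠ 0}. Let M satisfy M_{ij} = L*_{ij} + S*_{ij} for (i,j) ∈ Ω. Let {T_λ} be a family of thresholding functions satisfying (P1)–(P3) with constants K, B > 0. Suppose (μr/n)σ1* ≤ β ≤ C_init·(μr/n)σ1* for some C_init ≥ 1, let γ ∈ (0,1), t ∈ ℕ, and set ξ = β·γ^t. If a matrix L satisfies ‖L − L*‖_∞ ≤ (μr/n)σ1*·γ^t, then S := T_ξ(P_Ω(M − L)) (applied entrywise) satisfies: supp(S) ⊆ Ω_{S*}, and ‖P_Ω(S − S*)‖_∞ ≤ (K + B)·C_init·(μr/n)σ1*·γ^t. -/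
open Matrix MeasureTheory
open scoped Classical

noncomputable section

/-- Euclidean norm of a finitely-indexed real vector. -/
def vecNorm {n : Type*} [Fintype n] (v : n → ℝ) : ℝ :=
  Real.sqrt (∑ j, (v j) ^ 2)

/-- Spectral norm (ℓ₂ operator norm) of a real matrix. -/
def specNorm {m n : Type*} [Fintype m] [Fintype n] (A : Matrix m n ℝ) : ℝ :=
  sSup {c : ℝ | ∃ x : n → ℝ, vecNorm x ≤ 1 ∧ c = vecNorm (A.mulVec x)}

/-- Frobenius norm of a real matrix. -/
def frobNorm {m n : Type*} [Fintype m] [Fintype n] (A : Matrix m n ℝ) : ℝ :=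
  Real.sqrt (∑ i, ∑ j, (A i j) ^ 2)

/-- Entrywise maximum norm ‖·‖_∞ of a real matrix. -/
def maxNorm {m n : Type*} [Fintype m] [Fintype n] (A : Matrix m n ℝ) : ℝ :=
  ⨆ i, ⨆ j, |A i j|

/-- Two-to-infinity norm ‖·‖_{2,∞}: maximum Euclidean norm of a row. -/
def twoInfNorm {m n : Type*} [Fintype m] [Fintype n] (A : Matrix m n ℝ) : ℝ :=
  ⨆ i, vecNorm (fun j => A i j)

/-- Projection onto the entries indexed by `Ω`. -/
def projS {n : ℕ} (Ω : Set (Fin n × Fin n)) (Z : Matrix (Fin n) (Fin n) ℝ) :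
    Matrix (Fin n) (Fin n) ℝ :=
  Matrix.of fun i j => if (i, j) ∈ Ω then Z i j else 0


/-!
On `Ω` the observation `P_Ω(M − L)` equals `S* + (L* − L)`: the sparse matrix perturbed entrywise by
at most `(μr/n)σ₁γᵗ ≤ ξ`. Hence (P1) annihilates every entry where `S*` vanishes (and every entry
off `Ω`, where the observation is `0`), while (P2) and (P3), through the triangle inequality at
`T_ξ(S*ᵢⱼ)`, give `|T_ξ(x) − S*ᵢⱼ| ≤ K|x − S*ᵢⱼ| + Bξ ≤ (K + B)ξ ≤ (K + B)·C_init·(μr/n)σ₁γᵗ`.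
-/

lemma abs_apply_le_maxNorm {m k : Type*} [Fintype m] [Fintype k] (A : Matrix m k ℝ)
    (i : m) (j : k) : |A i j| ≤ maxNorm A :=
  show |A i j| ≤ ⨆ i, ⨆ j, |A i j| from (le_ciSup (Set.finite_range _).bddAbove j).trans
    (le_ciSup (f := fun i => ⨆ j, |A i j|) (Set.finite_range _).bddAbove i)

lemma maxNorm_le {m k : Type*} [Fintype m] [Fintype k] (A : Matrix m k ℝ) {c : ℝ}
    (hc : 0 ≤ c) (h : ∀ i j, |A i j| ≤ c) : maxNorm A ≤ c :=
  Real.iSup_le (fun i => Real.iSup_le (h i) hc) hc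

@[simp]
lemma projS_apply {n : ℕ} (Ω : Set (Fin n × Fin n)) (Z : Matrix (Fin n) (Fin n) ℝ)
    (i j : Fin n) : projS Ω Z i j = if (i, j) ∈ Ω then Z i j else 0 :=
  rfl

lemma abs_sub_le_of_lipschitz {f : ℝ → ℝ} {K b x y : ℝ}
    (hf : |f x - f y| ≤ K * |x - y|) (hy : |f y - y| ≤ b) :
    |f x - y| ≤ K * |x - y| + b :=
  (abs_sub_le _ (f y) _).trans (add_le_add hf hy)

section Observation

variable {n : ℕ} {Ω : Set (Fin n × Fin n)} {Lstar Sstar M L : Matrix (Fin n) (Fin n) ℝ}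
  {i j : Fin n}

lemma projS_sub_apply_of_mem (hM : ∀ i j : Fin n, (i, j) ∈ Ω → M i j = Lstar i j + Sstar i j)
    (hij : (i, j) ∈ Ω) : projS Ω (M - L) i j = Sstar i j + (Lstar - L) i j := by
  simp only [projS_apply, hij, if_true, Matrix.sub_apply, hM i j hij]
  ring

lemma mem_and_ne_zero_of_threshold_ne_zero
    (hM : ∀ i j : Fin n, (i, j) ∈ Ω → M i j = Lstar i j + Sstar i j)
    {f : ℝ → ℝ} {ξ : ℝ} (hf : ∀ x, |x| ≤ ξ → f x = 0) (hξ : 0 ≤ ξ)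
    (hLij : |(Lstar - L) i j| ≤ ξ) (hne : f (projS Ω (M - L) i j) ≠ 0) :
    (i, j) ∈ Ω ∧ Sstar i j ≠ 0 := by
  by_contra! hzero
  apply hne
  by_cases hij : (i, j) ∈ Ω
  · rw [projS_sub_apply_of_mem hM hij, hzero hij, zero_add]
    exact hf _ hLij
  · rw [projS_apply, if_neg hij]
    exact hf 0 (by rwa [abs_zero])

lemma abs_threshold_projS_sub_le
    (hM : ∀ i j : Fin n, (i, j) ∈ Ω → M i j = Lstar i j + Sstar i j)
    {f : ℝ → ℝ} {K b ξ : ℝ} (hK : 0 ≤ K) (hf : ∀ x y, |f x - f y| ≤ K * |x - y|)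
    (hb : ∀ x, |f x - x| ≤ b) (hLij : |(Lstar - L) i j| ≤ ξ) (hij : (i, j) ∈ Ω) :
    |f (projS Ω (M - L) i j) - Sstar i j| ≤ K * ξ + b := by
  refine (abs_sub_le_of_lipschitz (hf _ _) (hb _)).trans ?_
  rw [projS_sub_apply_of_mem hM hij, add_sub_cancel_left]
  gcongr

end Observation

theorem stmt3_general {n : ℕ} (Ω : Set (Fin n × Fin n))
    (Lstar Sstar M L : Matrix (Fin n) (Fin n) ℝ)
    (hM : ∀ i j : Fin n, (i, j) ∈ Ω → M i j = Lstar i j + Sstar i j)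
    (T : ℝ → ℝ → ℝ) (K B : ℝ) (hK : 0 < K) (hB : 0 < B)
    (hP1 : ∀ lam > (0 : ℝ), ∀ x : ℝ, |x| ≤ lam → T lam x = 0)
    (hP2 : ∀ lam > (0 : ℝ), ∀ x y : ℝ, |T lam x - T lam y| ≤ K * |x - y|)
    (hP3 : ∀ lam > (0 : ℝ), ∀ x : ℝ, |T lam x - x| ≤ B * lam)
    (μ r σ1 : ℝ) (hμ : 0 < μ) (hr : 0 < r) (hσ1 : 0 < σ1)
    (C_init β γ : ℝ)
    (hβ1 : μ * r / n * σ1 ≤ β) (hβ2 : β ≤ C_init * (μ * r / n * σ1))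
    (hγ0 : 0 < γ) (t : ℕ)
    (hL : maxNorm (L - Lstar) ≤ μ * r / n * σ1 * γ ^ t)
    (S : Matrix (Fin n) (Fin n) ℝ)
    (hS : S = Matrix.of fun i j => T (β * γ ^ t) (projS Ω (M - L) i j)) :
    (∀ i j : Fin n, S i j ≠ 0 → (i, j) ∈ Ω ∧ Sstar i j ≠ 0) ∧
    maxNorm (projS Ω (S - Sstar)) ≤ (K + B) * C_init * (μ * r / n * σ1) * γ ^ t := by
  subst hS
  set a := μ * r / n * σ1
  set ξ := β * γ ^ t
  have hγt : 0 < γ ^ t := pow_pos hγ0 t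
  -- `a` is the junk value `0` when `n = 0`; an entry `i : Fin n` rules that out.
  have hξ (i : Fin n) : 0 < ξ := by
    have : 0 < a := by have := i.pos; positivity
    exact mul_pos (this.trans_le hβ1) hγt
  have herr (i j : Fin n) : |(Lstar - L) i j| ≤ ξ := by
    rw [← neg_sub L Lstar, Matrix.neg_apply, abs_neg]
    exact (abs_apply_le_maxNorm _ i j).trans (hL.trans (mul_le_mul_of_nonneg_right hβ1 hγt.le))
  have hbound : 0 ≤ (K + B) * C_init * a * γ ^ t := by
    have : 0 ≤ C_init * a := ((by positivity : 0 ≤ a).trans hβ1).trans hβ2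
    rw [mul_assoc (K + B)]
    exact mul_nonneg (mul_nonneg (by linarith) this) hγt.le
  refine ⟨fun i j => mem_and_ne_zero_of_threshold_ne_zero hM (hP1 _ (hξ i)) (hξ i).le (herr i j),
    maxNorm_le _ hbound fun i j => ?_⟩
  by_cases hij : (i, j) ∈ Ω
  · calc |projS Ω (_ - Sstar) i j| = |T ξ (projS Ω (M - L) i j) - Sstar i j| := by
          simp [hij]
      _ ≤ K * ξ + B * ξ :=
          abs_threshold_projS_sub_le hM hK.le (hP2 _ (hξ i)) (hP3 _ (hξ i)) (herr i j) hij
      _ = (K + B) * ξ := (add_mul K B ξ).symm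
      _ ≤ (K + B) * (C_init * a * γ ^ t) :=
          mul_le_mul_of_nonneg_left (mul_le_mul_of_nonneg_right hβ2 hγt.le) (by linarith)
      _ = (K + B) * C_init * a * γ ^ t := by ring
  · simpa [hij] using hbound

/-- Thresholding step for robust matrix completion: if the current low-rank iterate `L`
is entrywise close to `L*`, then `S = T_ξ(P_Ω(M − L))` has support inside
`Ω_{S*} = {(i,j) ∈ Ω : S*_{ij} ≠ 0}` and `‖P_Ω(S − S*)‖_∞ ≤ (K+B)·C_init·(μr/n)σ₁*·γ^t`. -/
theorem stmt3 {n : ℕ} (Ω : Set (Fin n × Fin n))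
    (Lstar Sstar M L : Matrix (Fin n) (Fin n) ℝ)
    (hM : ∀ i j : Fin n, (i, j) ∈ Ω → M i j = Lstar i j + Sstar i j)
    (T : ℝ → ℝ → ℝ) (K B : ℝ) (hK : 0 < K) (hB : 0 < B)
    (hP1 : ∀ lam > (0 : ℝ), ∀ x : ℝ, |x| ≤ lam → T lam x = 0)
    (hP2 : ∀ lam > (0 : ℝ), ∀ x y : ℝ, |T lam x - T lam y| ≤ K * |x - y|)
    (hP3 : ∀ lam > (0 : ℝ), ∀ x : ℝ, |T lam x - x| ≤ B * lam)
    (μ r σ1 : ℝ) (hμ : 0 < μ) (hr : 0 < r) (hσ1 : 0 < σ1)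
    (C_init β γ : ℝ) (hCinit : 1 ≤ C_init)
    (hβ1 : μ * r / n * σ1 ≤ β) (hβ2 : β ≤ C_init * (μ * r / n * σ1))
    (hγ0 : 0 < γ) (hγ1 : γ < 1) (t : ℕ)
    (hL : maxNorm (L - Lstar) ≤ μ * r / n * σ1 * γ ^ t)
    (S : Matrix (Fin n) (Fin n) ℝ)
    (hS : S = Matrix.of fun i j => T (β * γ ^ t) (projS Ω (M - L) i j)) :
    (∀ i j : Fin n, S i j ≠ 0 → (i, j) ∈ Ω ∧ Sstar i j ≠ 0) ∧
    maxNorm (projS Ω (S - Sstar)) ≤ (K + B) * C_init * (μ * r / n * σ1) * γ ^ t :=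
  stmt3_general Ω Lstar Sstar M L hM T K B hK hB hP1 hP2 hP3 μ r σ1 hμ hr hσ1 C_init β γ hβ1 hβ2 hγ0
    t hL S hS
end
end

section
/- Let A ∈ ℝ^{N×N} be symmetric with eigenvalues λ1(A) ≥ λ2(A) ≥ … ordered decreasingly and λr(A) > 0, and let Ã = A + W with W symmetric. Let F ∈ ℝ^{N×r} (resp. F̃) have orthonormal columns consisting of eigenvectors of A (resp. Ã) corresponding to its r largest eigenvalues, with FᵀAF = Λ and F̃ᵀÃF̃ = Λ̃ the corresponding diagonal matrices of eigenvalues. Let H = FᵀF̃ have SVD AΣ̃Bᵀ and set G = ABᵀ. Define δ = λr(A) − λ_{r+1}(A). If ‖W‖₂ < δ, then ‖F̃ − FG‖_F ≤ √2·‖WF‖_F/(δ − ‖W‖₂). -/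
/-!
Since `F` and `F̃` have orthonormal columns and `G = ABᵀ` comes from the SVD `FᵀF̃ = AΣ̃Bᵀ`,
`‖F̃ − FG‖_F² = 2(r − Σᵢ σ̃ᵢ)`; the singular values lie in `[0, 1]`, so this is at most
`2(r − ‖FᵀF̃‖_F²)`, twice the squared mass of the rows of `Q̃ᵀF` outside the top `r` eigenvectors
of `Ã`. Each of those entries satisfies the Sylvester relation `(Q̃ᵀWF)ᵢⱼ = (λ̃ᵢ − λⱼ)(Q̃ᵀF)ᵢⱼ` with
`i > r ≥ j`, and Weyl's inequality `λ̃ᵢ ≤ λᵢ + ‖W‖₂` makes `λⱼ − λ̃ᵢ ≥ δ − ‖W‖₂`. Hence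
`(δ − ‖W‖₂)²(r − ‖FᵀF̃‖_F²) ≤ ‖Q̃ᵀWF‖_F² = ‖WF‖_F²`.

Weyl's inequality at index `k` is read off a nonzero vector orthogonal to the eigenvectors of `A`
before `k` and to those of `Ã` after `k`, which exists by counting dimensions: there the Rayleigh
quotient of `A` is at most `λₖ` and that of `Ã` at least `λ̃ₖ`.
-/

open Matrix MeasureTheory
open scoped Classical

noncomputable section

section Norms

variable {m n : Type*} [Fintype m] [Fintype n]

lemma dotProduct_self_nonneg (v : n → ℝ) : 0 ≤ v ⬝ᵥ v :=
  Fintype.sum_nonneg fun i => mul_self_nonneg (v i)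

lemma vecNorm_nonneg (v : n → ℝ) : 0 ≤ vecNorm v := Real.sqrt_nonneg _

lemma vecNorm_eq_sqrt_dotProduct (v : n → ℝ) : vecNorm v = √(v ⬝ᵥ v) := by
  simp [vecNorm, dotProduct, sq]

lemma vecNorm_sq (v : n → ℝ) : vecNorm v ^ 2 = v ⬝ᵥ v := by
  rw [vecNorm_eq_sqrt_dotProduct, Real.sq_sqrt (dotProduct_self_nonneg v)]

lemma vecNorm_eq_norm (v : n → ℝ) : vecNorm v = ‖WithLp.toLp 2 v‖ := by
  simp [vecNorm, EuclideanSpace.norm_eq]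

lemma dotProduct_le_vecNorm_mul (v w : n → ℝ) : v ⬝ᵥ w ≤ vecNorm v * vecNorm w := by
  rw [vecNorm_eq_norm, vecNorm_eq_norm, dotProduct_comm]
  exact real_inner_le_norm (WithLp.toLp 2 v) (WithLp.toLp 2 w)

open scoped Matrix.Norms.L2Operator in
lemma specNorm_eq_l2_opNorm (A : Matrix m n ℝ) : specNorm A = ‖A‖ := by
  have hbound (x : n → ℝ) : vecNorm (A *ᵥ x) ≤ ‖A‖ * vecNorm x := by
    simpa [vecNorm_eq_norm] using A.l2_opNorm_mulVec (WithLp.toLp 2 x)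
  rw [specNorm]
  set S := {c | ∃ x : n → ℝ, vecNorm x ≤ 1 ∧ c = vecNorm (A *ᵥ x)}
  have hS : ∀ c ∈ S, c ≤ ‖A‖ := by
    rintro _ ⟨x, hx, rfl⟩
    exact (hbound x).trans (mul_le_of_le_one_right (norm_nonneg A) hx)
  have h0 : (0 : ℝ) ∈ S := ⟨0, by simp [vecNorm], by simp [vecNorm]⟩
  refine le_antisymm (csSup_le ⟨0, h0⟩ hS) ?_
  refine ContinuousLinearMap.opNorm_le_of_unit_norm (le_csSup ⟨_, hS⟩ h0) fun x hx => ?_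
  exact le_csSup ⟨_, hS⟩
    ⟨WithLp.ofLp x, by simp [vecNorm_eq_norm, hx], by rw [vecNorm_eq_norm]; rfl⟩

lemma vecNorm_mulVec_le (A : Matrix m n ℝ) (x : n → ℝ) :
    vecNorm (A *ᵥ x) ≤ specNorm A * vecNorm x := by
  open scoped Matrix.Norms.L2Operator in
  simpa [specNorm_eq_l2_opNorm, vecNorm_eq_norm] using A.l2_opNorm_mulVec (WithLp.toLp 2 x)

lemma dotProduct_mulVec_le_specNorm (A : Matrix n n ℝ) (x : n → ℝ) :
    x ⬝ᵥ (A *ᵥ x) ≤ specNorm A * (x ⬝ᵥ x) :=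
  calc x ⬝ᵥ (A *ᵥ x) ≤ vecNorm x * vecNorm (A *ᵥ x) := dotProduct_le_vecNorm_mul _ _
    _ ≤ vecNorm x * (specNorm A * vecNorm x) :=
      mul_le_mul_of_nonneg_left (vecNorm_mulVec_le A x) (vecNorm_nonneg x)
    _ = specNorm A * (x ⬝ᵥ x) := by rw [← vecNorm_sq]; ring

lemma frobNorm_nonneg (A : Matrix m n ℝ) : 0 ≤ frobNorm A := Real.sqrt_nonneg _

lemma frobNorm_sq (A : Matrix m n ℝ) : frobNorm A ^ 2 = ∑ i, ∑ j, A i j ^ 2 :=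
  Real.sq_sqrt (Finset.sum_nonneg fun _ _ => Finset.sum_nonneg fun _ _ => sq_nonneg _)

lemma frobNorm_eq_sqrt_trace (A : Matrix m n ℝ) : frobNorm A = √(trace (Aᵀ * A)) := by
  rw [frobNorm, Finset.sum_comm]
  simp [trace, mul_apply, sq]

lemma frobNorm_sq_eq_trace (A : Matrix m n ℝ) : frobNorm A ^ 2 = trace (Aᵀ * A) := by
  rw [frobNorm_sq, Finset.sum_comm]
  simp [trace, mul_apply, sq]

lemma frobNorm_transpose (A : Matrix m n ℝ) : frobNorm Aᵀ = frobNorm A := by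
  rw [frobNorm, frobNorm, Finset.sum_comm]
  rfl

lemma frobNorm_sub_sq (X Y : Matrix m n ℝ) :
    frobNorm (X - Y) ^ 2 = frobNorm X ^ 2 - 2 * trace (Xᵀ * Y) + frobNorm Y ^ 2 := by
  rw [frobNorm_sq_eq_trace, frobNorm_sq_eq_trace, frobNorm_sq_eq_trace, transpose_sub,
    Matrix.sub_mul, Matrix.mul_sub, Matrix.mul_sub, trace_sub, trace_sub, trace_sub,
    ← trace_transpose (Yᵀ * X), transpose_mul, transpose_transpose]
  ring

end Norms

lemma transpose_mul_submatrix_of_orthonormal {m n κ : Type*} [Fintype m] [DecidableEq n]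
    [DecidableEq κ] {U : Matrix m n ℝ} (hU : Uᵀ * U = 1) {e : κ → n}
    (he : Function.Injective e) :
    (U.submatrix id e)ᵀ * U.submatrix id e = 1 := by
  rw [transpose_submatrix, ← submatrix_mul _ _ _ _ _ Function.bijective_id, hU,
    submatrix_one _ he]

section Orthonormal

variable {m n : Type*} [Fintype m] [Fintype n] [DecidableEq n] {U : Matrix m n ℝ}

lemma transpose_mul_mul_of_orthonormal {p : Type*} (hU : Uᵀ * U = 1) (M : Matrix n p ℝ) :
    (U * M)ᵀ * (U * M) = Mᵀ * M := by
  rw [transpose_mul, Matrix.mul_assoc, ← Matrix.mul_assoc Uᵀ, hU, Matrix.one_mul]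

lemma frobNorm_mul_of_orthonormal {p : Type*} [Fintype p] (hU : Uᵀ * U = 1)
    (M : Matrix n p ℝ) :
    frobNorm (U * M) = frobNorm M := by
  rw [frobNorm_eq_sqrt_trace, frobNorm_eq_sqrt_trace, transpose_mul_mul_of_orthonormal hU]

lemma dotProduct_mulVec_self_of_orthonormal (hU : Uᵀ * U = 1) (v : n → ℝ) :
    (U *ᵥ v) ⬝ᵥ (U *ᵥ v) = v ⬝ᵥ v := by
  rw [dotProduct_mulVec, vecMul_mulVec, hU, vecMul_one]

lemma vecNorm_mulVec_of_orthonormal (hU : Uᵀ * U = 1) (v : n → ℝ) :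
    vecNorm (U *ᵥ v) = vecNorm v := by
  rw [vecNorm_eq_sqrt_dotProduct, vecNorm_eq_sqrt_dotProduct,
    dotProduct_mulVec_self_of_orthonormal hU]

lemma vecNorm_transpose_mulVec_le (hU : Uᵀ * U = 1) (w : m → ℝ) :
    vecNorm (Uᵀ *ᵥ w) ≤ vecNorm w := by
  have h := dotProduct_le_vecNorm_mul w (U *ᵥ (Uᵀ *ᵥ w))
  rw [vecNorm_mulVec_of_orthonormal hU, dotProduct_mulVec, ← mulVec_transpose,
    ← vecNorm_sq] at h
  nlinarith [vecNorm_nonneg w, vecNorm_nonneg (Uᵀ *ᵥ w)]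

lemma frobNorm_sq_of_orthonormal (hU : Uᵀ * U = 1) : frobNorm U ^ 2 = Fintype.card n := by
  rw [frobNorm_sq_eq_trace, hU, trace_one]

end Orthonormal

section SingularValues

variable {m n p k : Type*} [Fintype m] [Fintype n] [Fintype p] [Fintype k]
  [DecidableEq k] {A' : Matrix n k ℝ} {B' : Matrix p k ℝ} {σ : k → ℝ}

lemma le_one_of_transpose_mul_eq_svd [DecidableEq n] [DecidableEq p]
    {U : Matrix m n ℝ} {V : Matrix m p ℝ}
    (hU : Uᵀ * U = 1) (hV : Vᵀ * V = 1) (hA' : A'ᵀ * A' = 1) (hB' : B'ᵀ * B' = 1)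
    (h : Uᵀ * V = A' * diagonal σ * B'ᵀ) (i : k) : σ i ≤ 1 := by
  set e : k → ℝ := Pi.single i 1
  have he : vecNorm e = 1 := by simp [vecNorm_eq_sqrt_dotProduct, e]
  have hσ : σ i = (A' *ᵥ e) ⬝ᵥ (Uᵀ *ᵥ (V *ᵥ (B' *ᵥ e))) := by
    have hdiag : A'ᵀ * (Uᵀ * V) * B' = diagonal σ := by
      rw [h, Matrix.mul_assoc, Matrix.mul_assoc, Matrix.mul_assoc, hB', Matrix.mul_one,
        ← Matrix.mul_assoc, hA', Matrix.one_mul]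
    rw [← vecMul_transpose, ← dotProduct_mulVec, mulVec_mulVec, mulVec_mulVec, mulVec_mulVec,
      Matrix.mul_assoc A'ᵀ Uᵀ V, hdiag]
    simp [e]
  calc σ i ≤ vecNorm (A' *ᵥ e) * vecNorm (Uᵀ *ᵥ (V *ᵥ (B' *ᵥ e))) :=
        hσ ▸ dotProduct_le_vecNorm_mul _ _
    _ ≤ 1 * vecNorm (V *ᵥ (B' *ᵥ e)) := by
        rw [vecNorm_mulVec_of_orthonormal hA', he]
        exact mul_le_mul_of_nonneg_left (vecNorm_transpose_mulVec_le hU _) zero_le_one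
    _ = 1 := by rw [vecNorm_mulVec_of_orthonormal hV, vecNorm_mulVec_of_orthonormal hB', he,
        one_mul]

lemma frobNorm_svd_sq (hA' : A'ᵀ * A' = 1) (hB' : B'ᵀ * B' = 1) :
    frobNorm (A' * diagonal σ * B'ᵀ) ^ 2 = ∑ i, σ i ^ 2 := by
  rw [Matrix.mul_assoc, frobNorm_mul_of_orthonormal hA', ← frobNorm_transpose, transpose_mul,
    transpose_transpose, diagonal_transpose, frobNorm_mul_of_orthonormal hB', frobNorm_sq]
  simp [diagonal_apply]

end SingularValues

section Procrustes

variable {m k : Type*} [Fintype m] [Fintype k] [DecidableEq k]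
  {F Ft : Matrix m k ℝ} {A' B' : Matrix k k ℝ} {σ : k → ℝ}

lemma frobNorm_sub_mul_svd_sq (hF : Fᵀ * F = 1) (hFt : Ftᵀ * Ft = 1) (hA' : A'ᵀ * A' = 1)
    (hB' : B'ᵀ * B' = 1) (h : Fᵀ * Ft = A' * diagonal σ * B'ᵀ) :
    frobNorm (Ft - F * (A' * B'ᵀ)) ^ 2 = 2 * (Fintype.card k - ∑ i, σ i) := by
  have hFG : (F * (A' * B'ᵀ))ᵀ * (F * (A' * B'ᵀ)) = 1 := by
    rw [transpose_mul_mul_of_orthonormal hF, transpose_mul_mul_of_orthonormal hA',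
      transpose_transpose, mul_eq_one_comm.mp hB']
  have hcross : trace (Ftᵀ * (F * (A' * B'ᵀ))) = ∑ i, σ i := by
    have hH : Ftᵀ * F = B' * diagonal σ * A'ᵀ := by
      rw [← transpose_transpose (Ftᵀ * F), transpose_mul, transpose_transpose, h,
        transpose_mul, transpose_mul, transpose_transpose, diagonal_transpose,
        Matrix.mul_assoc]
    rw [← Matrix.mul_assoc, hH, Matrix.mul_assoc, Matrix.mul_assoc, ← Matrix.mul_assoc A'ᵀ,
      hA', Matrix.one_mul, trace_mul_comm, Matrix.mul_assoc, hB', Matrix.mul_one,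
      trace_diagonal]
  rw [frobNorm_sub_sq, frobNorm_sq_of_orthonormal hFt, frobNorm_sq_of_orthonormal hFG, hcross]
  ring

lemma frobNorm_sub_mul_svd_sq_le (hF : Fᵀ * F = 1) (hFt : Ftᵀ * Ft = 1)
    (hA' : A'ᵀ * A' = 1) (hB' : B'ᵀ * B' = 1) (hσ : ∀ i, 0 ≤ σ i)
    (h : Fᵀ * Ft = A' * diagonal σ * B'ᵀ) :
    frobNorm (Ft - F * (A' * B'ᵀ)) ^ 2 ≤ 2 * (Fintype.card k - frobNorm (Fᵀ * Ft) ^ 2) := by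
  have hσ2 (i : k) : σ i ^ 2 ≤ σ i := by
    nlinarith [hσ i, le_one_of_transpose_mul_eq_svd hF hFt hA' hB' h i]
  rw [frobNorm_sub_mul_svd_sq hF hFt hA' hB' h, h, frobNorm_svd_sq hA' hB']
  linarith [Finset.sum_le_sum fun i (_ : i ∈ Finset.univ) => hσ2 i]

end Procrustes

section Eigen

open Finset

variable {ι : Type*} [Fintype ι] [DecidableEq ι] {A W Q Qt : Matrix ι ι ℝ}
  {lam lamt : ι → ℝ}

lemma dotProduct_mulVec_diagonal_conj (d x : ι → ℝ) :
    x ⬝ᵥ ((Q * diagonal d * Qᵀ) *ᵥ x) = ∑ i, d i * (Qᵀ *ᵥ x) i ^ 2 := by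
  rw [← mulVec_mulVec, ← mulVec_mulVec, dotProduct_mulVec, ← mulVec_transpose]
  simp only [dotProduct, mulVec_diagonal]
  exact Finset.sum_congr rfl fun i _ => by ring

lemma dotProduct_self_eq_sum_transpose_mulVec_sq (hQ : Qᵀ * Q = 1) (x : ι → ℝ) :
    x ⬝ᵥ x = ∑ i, (Qᵀ *ᵥ x) i ^ 2 := by
  have hQT : Qᵀᵀ * Qᵀ = 1 := by rw [transpose_transpose, mul_eq_one_comm.mp hQ]
  rw [← dotProduct_mulVec_self_of_orthonormal hQT x]
  simp [dotProduct, sq]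

lemma transpose_mul_mul_apply_of_eigen (hQ : Qᵀ * Q = 1) (hQt : Qtᵀ * Qt = 1)
    (hA : A = Q * diagonal lam * Qᵀ) (hAW : A + W = Qt * diagonal lamt * Qtᵀ) (i j : ι) :
    (Qtᵀ * W * Q) i j = (lamt i - lam j) * (Qtᵀ * Q) i j := by
  have hQtAW : Qtᵀ * (A + W) = diagonal lamt * Qtᵀ := by
    rw [hAW, ← Matrix.mul_assoc, ← Matrix.mul_assoc, hQt, Matrix.one_mul]
  have hAQ : A * Q = Q * diagonal lam := by
    rw [hA, Matrix.mul_assoc, hQ, Matrix.mul_one]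
  have h : Qtᵀ * W * Q = diagonal lamt * (Qtᵀ * Q) - Qtᵀ * Q * diagonal lam := by
    rw [← Matrix.mul_assoc, ← hQtAW, Matrix.mul_assoc Qtᵀ Q, ← hAQ, Matrix.mul_add,
      Matrix.add_mul]
    simp [Matrix.mul_assoc]
  rw [h, Matrix.sub_apply, diagonal_mul, mul_diagonal]
  ring

lemma frobNorm_transpose_mul_submatrix_sq_add {n κ : Type*} [Fintype n] [DecidableEq n]
    [Fintype κ] [DecidableEq κ] {F : Matrix ι n ℝ} (hQt : Qtᵀ * Qt = 1) (hF : Fᵀ * F = 1)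
    (e : κ ↪ ι) :
    frobNorm (Fᵀ * Qt.submatrix id e) ^ 2 + ∑ i ∈ (univ.map e)ᶜ, ∑ j, (Qtᵀ * F) i j ^ 2
      = Fintype.card n := by
  have hQtT : Qtᵀᵀ * Qtᵀ = 1 := by rw [transpose_transpose, mul_eq_one_comm.mp hQt]
  have hhead : (Fᵀ * Qt.submatrix id e)ᵀ = (Qtᵀ * F).submatrix e id := by
    rw [transpose_mul, transpose_transpose, transpose_submatrix, ← submatrix_id_id F,
      ← submatrix_mul _ _ _ _ _ Function.bijective_id, submatrix_id_id]
  rw [← frobNorm_transpose, hhead, frobNorm_sq, ← frobNorm_sq_of_orthonormal hF,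
    ← frobNorm_mul_of_orthonormal hQtT F, frobNorm_sq, ← sum_compl_add_sum (univ.map e),
    sum_map, add_comm]
  rfl

lemma sq_mul_sum_compl_le_frobNorm_sq {κ : Type*} [Fintype κ] [DecidableEq κ]
    (hQ : Qᵀ * Q = 1) (hQt : Qtᵀ * Qt = 1) (hA : A = Q * diagonal lam * Qᵀ)
    (hAW : A + W = Qt * diagonal lamt * Qtᵀ) (e : κ ↪ ι) {g : ℝ} (hg : 0 ≤ g)
    (hgap : ∀ i ∈ (univ.map e)ᶜ, ∀ j, g ≤ lam (e j) - lamt i) :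
    g ^ 2 * ∑ i ∈ (univ.map e)ᶜ, ∑ j, (Qtᵀ * Q.submatrix id e) i j ^ 2 ≤
      frobNorm (W * Q.submatrix id e) ^ 2 := by
  have hQtT : Qtᵀᵀ * Qtᵀ = 1 := by rw [transpose_transpose, mul_eq_one_comm.mp hQt]
  have hentry (i : ι) (j : κ) : (Qtᵀ * (W * Q.submatrix id e)) i j =
      (lamt i - lam (e j)) * (Qtᵀ * Q.submatrix id e) i j := by
    rw [← Matrix.mul_assoc]
    exact transpose_mul_mul_apply_of_eigen hQ hQt hA hAW i (e j)
  rw [← frobNorm_mul_of_orthonormal hQtT, frobNorm_sq, mul_sum]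
  refine (sum_le_sum fun i hi => ?_).trans
    (sum_le_univ_sum_of_nonneg fun i => sum_nonneg fun j _ => sq_nonneg _)
  rw [mul_sum]
  refine sum_le_sum fun j _ => ?_
  rw [hentry, mul_pow, ← neg_sub, neg_sq]
  exact mul_le_mul_of_nonneg_right (pow_le_pow_left₀ hg (hgap i hi j) 2) (sq_nonneg _)

end Eigen

section Weyl

variable {ι : Type*} [Fintype ι] [DecidableEq ι] [LinearOrder ι] {A W Q Qt : Matrix ι ι ℝ}
  {lam lamt : ι → ℝ}

lemma dotProduct_mulVec_le_of_antitone (hQ : Qᵀ * Q = 1) (hd : Antitone lam) {k : ι}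
    {x : ι → ℝ} (hx : ∀ i < k, (Qᵀ *ᵥ x) i = 0) :
    x ⬝ᵥ ((Q * diagonal lam * Qᵀ) *ᵥ x) ≤ lam k * (x ⬝ᵥ x) := by
  rw [dotProduct_mulVec_diagonal_conj, dotProduct_self_eq_sum_transpose_mulVec_sq hQ,
    Finset.mul_sum]
  refine Finset.sum_le_sum fun i _ => ?_
  rcases lt_or_ge i k with hik | hki
  · simp [hx i hik]
  · exact mul_le_mul_of_nonneg_right (hd hki) (sq_nonneg _)

lemma le_dotProduct_mulVec_of_antitone (hQ : Qᵀ * Q = 1) (hd : Antitone lam) {k : ι}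
    {x : ι → ℝ} (hx : ∀ i, k < i → (Qᵀ *ᵥ x) i = 0) :
    lam k * (x ⬝ᵥ x) ≤ x ⬝ᵥ ((Q * diagonal lam * Qᵀ) *ᵥ x) := by
  rw [dotProduct_mulVec_diagonal_conj, dotProduct_self_eq_sum_transpose_mulVec_sq hQ,
    Finset.mul_sum]
  refine Finset.sum_le_sum fun i _ => ?_
  rcases lt_or_ge k i with hki | hik
  · simp [hx i hki]
  · exact mul_le_mul_of_nonneg_right (hd hik) (sq_nonneg _)

lemma exists_ne_zero_mulVec_eq_zero_of_lt_of_gt (P P' : Matrix ι ι ℝ) (k : ι) :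
    ∃ x ≠ 0, (∀ i < k, (P *ᵥ x) i = 0) ∧ ∀ i, k < i → (P' *ᵥ x) i = 0 := by
  let L : (ι → ℝ) →ₗ[ℝ] ({i // i ≠ k} → ℝ) := LinearMap.pi fun i =>
    if (i : ι) < k then (LinearMap.proj (i : ι)).comp P.mulVecLin
    else (LinearMap.proj (i : ι)).comp P'.mulVecLin
  have hdim : Module.finrank ℝ ({i // i ≠ k} → ℝ) < Module.finrank ℝ (ι → ℝ) := by
    simpa only [Module.finrank_fintype_fun_eq_card] using
      Fintype.card_subtype_lt (p := (· ≠ k)) fun h => h rfl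
  obtain ⟨x, hxL, hx0⟩ :=
    Submodule.exists_mem_ne_zero_of_ne_bot (L.ker_ne_bot_of_finrank_lt hdim)
  refine ⟨x, hx0, fun i hi => ?_, fun i hi => ?_⟩
  · simpa [L, hi] using congrFun (LinearMap.mem_ker.1 hxL) ⟨i, hi.ne⟩
  · simpa [L, hi.not_gt] using congrFun (LinearMap.mem_ker.1 hxL) ⟨i, hi.ne'⟩

lemma eigenvalue_le_add_specNorm (hQ : Qᵀ * Q = 1) (hQt : Qtᵀ * Qt = 1) (hlam : Antitone lam)
    (hlamt : Antitone lamt) (hA : A = Q * diagonal lam * Qᵀ)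
    (hAW : A + W = Qt * diagonal lamt * Qtᵀ) (k : ι) :
    lamt k ≤ lam k + specNorm W := by
  obtain ⟨x, hx0, hxQ, hxQt⟩ := exists_ne_zero_mulVec_eq_zero_of_lt_of_gt Qᵀ Qtᵀ k
  have hA_le : x ⬝ᵥ (A *ᵥ x) ≤ lam k * (x ⬝ᵥ x) :=
    hA ▸ dotProduct_mulVec_le_of_antitone hQ hlam hxQ
  have hAW_ge : lamt k * (x ⬝ᵥ x) ≤ x ⬝ᵥ ((A + W) *ᵥ x) :=
    hAW ▸ le_dotProduct_mulVec_of_antitone hQt hlamt hxQt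
  have hW_le := dotProduct_mulVec_le_specNorm W x
  have hx : 0 < x ⬝ᵥ x :=
    (dotProduct_self_nonneg x).lt_of_ne' (dotProduct_self_eq_zero.not.mpr hx0)
  rw [add_mulVec, dotProduct_add] at hAW_ge
  nlinarith

end Weyl

lemma sub_le_sub_of_mem_compl_map_castLEEmb {N r : ℕ} (hrN : r < N) {lam lamt : Fin N → ℝ}
    (hlam : Antitone lam) (hlamt : Antitone lamt) {s : ℝ}
    (hweyl : lamt ⟨r, hrN⟩ ≤ lam ⟨r, hrN⟩ + s) :
    ∀ i ∈ (Finset.univ.map (Fin.castLEEmb hrN.le))ᶜ, ∀ j,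
      lam ⟨r - 1, (r.sub_le 1).trans_lt hrN⟩ - lam ⟨r, hrN⟩ - s ≤
        lam (Fin.castLE hrN.le j) - lamt i := by
  intro i hi j
  have hri : ⟨r, hrN⟩ ≤ i := by
    by_contra! h
    exact Finset.mem_compl.mp hi (Finset.mem_map.mpr ⟨⟨i, h⟩, Finset.mem_univ _, rfl⟩)
  have hjr : Fin.castLE hrN.le j ≤ ⟨r - 1, (r.sub_le 1).trans_lt hrN⟩ := by
    change (j : ℕ) ≤ r - 1
    omega
  linarith [hlam hjr, hlamt hri]

/-- Davis–Kahan-type bound: `‖F̃ − FG‖_F ≤ √2·‖WF‖_F/(δ − ‖W‖₂)` for the top-`r`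
eigenvector matrices of a symmetric matrix `A` and its perturbation `Ã = A + W`
(Ding–Chen, Lemma 14). -/
theorem stmt9 {N r : ℕ} (hrN : r < N)
    (Am W : Matrix (Fin N) (Fin N) ℝ)
    -- eigendecompositions of A and Ã = A + W with decreasing eigenvalues
    (Q Qt : Matrix (Fin N) (Fin N) ℝ) (lam lamt : Fin N → ℝ)
    (hQ : Qᵀ * Q = 1) (hQt : Qtᵀ * Qt = 1)
    (hlam : ∀ i j : Fin N, i ≤ j → lam j ≤ lam i)
    (hlamt : ∀ i j : Fin N, i ≤ j → lamt j ≤ lamt i)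
    (hAeig : Am = Q * Matrix.diagonal lam * Qᵀ)
    (hAteig : Am + W = Qt * Matrix.diagonal lamt * Qtᵀ)
    -- F, F̃: orthonormal eigenvectors for the r largest eigenvalues
    (F Ft : Matrix (Fin N) (Fin r) ℝ)
    (hF : F = Q.submatrix id (Fin.castLE hrN.le))
    (hFt : Ft = Qt.submatrix id (Fin.castLE hrN.le))
    -- SVD of H = FᵀF̃ and the rotation G
    (A' B' : Matrix (Fin r) (Fin r) ℝ) (σtil : Fin r → ℝ)
    (hA' : A'ᵀ * A' = 1) (hB' : B'ᵀ * B' = 1) (hσtil : ∀ i, 0 ≤ σtil i)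
    (hH : Fᵀ * Ft = A' * Matrix.diagonal σtil * B'ᵀ)
    (G : Matrix (Fin r) (Fin r) ℝ) (hG : G = A' * B'ᵀ)
    -- eigengap condition
    (δ : ℝ) (hδ : δ = lam ⟨r - 1, by omega⟩ - lam ⟨r, hrN⟩)
    (hW : specNorm W < δ) :
    frobNorm (Ft - F * G) ≤ Real.sqrt 2 * frobNorm (W * F) / (δ - specNorm W) := by
  set e := Fin.castLEEmb hrN.le
  replace hF : F = Q.submatrix id e := hF
  replace hFt : Ft = Qt.submatrix id e := hFt
  have hFF : Fᵀ * F = 1 := hF ▸ transpose_mul_submatrix_of_orthonormal hQ e.injective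
  have hFtFt : Ftᵀ * Ft = 1 := hFt ▸ transpose_mul_submatrix_of_orthonormal hQt e.injective
  have hgap : ∀ i ∈ (Finset.univ.map e)ᶜ, ∀ j, δ - specNorm W ≤ lam (e j) - lamt i :=
    hδ ▸ sub_le_sub_of_mem_compl_map_castLEEmb hrN hlam hlamt
      (eigenvalue_le_add_specNorm hQ hQt hlam hlamt hAeig hAteig ⟨r, hrN⟩)
  have hg : 0 < δ - specNorm W := sub_pos.mpr hW
  have hproc := frobNorm_sub_mul_svd_sq_le hFF hFtFt hA' hB' hσtil hH
  have hsplit := frobNorm_transpose_mul_submatrix_sq_add hQt hFF e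
  have htail := sq_mul_sum_compl_le_frobNorm_sq hQ hQt hAeig hAteig e hg.le hgap
  rw [← hF] at htail
  rw [← hFt] at hsplit
  subst hG
  refine le_of_pow_le_pow_left₀ two_ne_zero
    (div_nonneg (mul_nonneg (Real.sqrt_nonneg 2) (frobNorm_nonneg _)) hg.le) ?_
  rw [div_pow, mul_pow, Real.sq_sqrt zero_le_two, le_div_iff₀ (pow_pos hg 2)]
  nlinarith [mul_le_mul_of_nonneg_right hproc (sq_nonneg (δ - specNorm W))]
end
end

section
/- For every λ > 0 and a > 2, the SCAD thresholding function T_{λ,a}(x), defined by T_{λ,a}(x) = sign(x)·max(|x| − λ, 0) for |x| ≤ 2λ, T_{λ,a}(x) = ((a−1)x − sign(x)·aλ)/(a−2) for 2λ < |x| < aλ, and T_{λ,a}(x) = x for |x| ≥ aλ, satisfies: (P1) T_{λ,a}(x) = 0 for all |x| ≤ λ; (P2) |T_{λ,a}(x) − T_{λ,a}(y)| ≤ ((a−1)/(a−2))·|x − y| for all x, y ∈ ℝ (i.e., property (P2) holds with K = (a−1)/(a−2)); (P3) |T_{λ,a}(x) − x| ≤ λ for all x ∈ ℝ (i.e.,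 property (P3) holds with B = 1). -/
noncomputable section

/-- The SCAD thresholding function `T_{λ,a}`. -/
def scadThresh (lam a x : ℝ) : ℝ :=
  if |x| ≤ 2 * lam then Real.sign x * max (|x| - lam) 0
  else if |x| < a * lam then ((a - 1) * x - Real.sign x * (a * lam)) / (a - 2)
  else x

/-!
`T_{λ,a}` is odd, and on `[0, ∞)` it is `min x (max ℓ(x) (max (x - λ) 0))`, where `ℓ` is the
affine middle piece, of slope `K = (a - 1)/(a - 2) ≥ 1`. Each of the three pieces is
`K`-Lipschitz, hence so is their min/max; an odd function that is `K`-Lipschitz on `[0, ∞)`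
is `K`-Lipschitz on `ℝ`, by reflection on `(-∞, 0]` and the triangle inequality through `0`.
The same formula gives `x - λ ≤ T_{λ,a}(x) ≤ x` for `x ≥ 0`.
-/

open Set NNReal

theorem LipschitzWith.of_lipschitzOnWith_Iic_Ici {α : Type*} [PseudoMetricSpace α] {f : ℝ → α}
    {K : ℝ≥0} {c : ℝ} (h₁ : LipschitzOnWith K f (Iic c)) (h₂ : LipschitzOnWith K f (Ici c)) :
    LipschitzWith K f := by
  refine LipschitzWith.of_dist_le_mul fun x y => ?_
  wlog hxy : x ≤ y generalizing x y
  · rw [dist_comm, dist_comm x]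
    exact this y x (le_of_not_ge hxy)
  rcases le_total y c with hy | hy
  · exact h₁.dist_le_mul x (hxy.trans hy) y hy
  rcases le_total c x with hx | hx
  · exact h₂.dist_le_mul x hx y (hx.trans hxy)
  calc dist (f x) (f y) ≤ dist (f x) (f c) + dist (f c) (f y) := dist_triangle _ _ _
    _ ≤ K * dist x c + K * dist c y := add_le_add
        (h₁.dist_le_mul x hx c self_mem_Iic) (h₂.dist_le_mul c self_mem_Ici y hy)
    _ = K * dist x y := by
        rw [Real.dist_eq, Real.dist_eq, Real.dist_eq, abs_of_nonpos (by linarith),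
          abs_of_nonpos (by linarith), abs_of_nonpos (by linarith)]
        ring

theorem Function.Odd.lipschitzOnWith_Iic {E : Type*} [SeminormedAddCommGroup E] {f : ℝ → E}
    {K : ℝ≥0} (hf : f.Odd) (h : LipschitzOnWith K f (Ici 0)) : LipschitzOnWith K f (Iic 0) :=
  LipschitzOnWith.of_dist_le_mul fun x hx y hy => by
    have := h.dist_le_mul (-x) (mem_Ici.2 (neg_nonneg.2 hx)) (-y) (mem_Ici.2 (neg_nonneg.2 hy))
    rwa [hf, hf, dist_neg_neg, dist_neg_neg] at this

theorem Function.Odd.lipschitzWith {E : Type*} [SeminormedAddCommGroup E] {f : ℝ → E}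
    {K : ℝ≥0} (hf : f.Odd) (h : LipschitzOnWith K f (Ici 0)) : LipschitzWith K f :=
  .of_lipschitzOnWith_Iic_Ici (hf.lipschitzOnWith_Iic h) h

variable {lam a : ℝ}

theorem scadThresh_odd (lam a : ℝ) : (scadThresh lam a).Odd := fun x => by
  unfold scadThresh
  rw [abs_neg, Real.sign_neg]
  split_ifs <;> ring

theorem scadThresh_of_abs_le {x : ℝ} (hx : |x| ≤ lam) : scadThresh lam a x = 0 := by
  have hlam : 0 ≤ lam := (abs_nonneg x).trans hx
  rw [scadThresh, if_pos (by linarith), max_eq_right (by linarith), mul_zero]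

theorem scadThresh_of_nonneg (ha : 2 < a) {x : ℝ} (hx : 0 ≤ x) :
    scadThresh lam a x = min x (max (((a - 1) * x - a * lam) / (a - 2)) (max (x - lam) 0)) := by
  rcases hx.eq_or_lt with rfl | hx
  · simp [scadThresh]
  have ha₂ : 0 < a - 2 := by linarith
  have hL_sub : ((a - 1) * x - a * lam) / (a - 2) - (x - lam) = (x - 2 * lam) / (a - 2) := by
    field_simp; ring
  have hL_sub' : ((a - 1) * x - a * lam) / (a - 2) - x = (x - a * lam) / (a - 2) := by
    field_simp; ring
  set L := ((a - 1) * x - a * lam) / (a - 2)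
  unfold scadThresh
  rw [abs_of_pos hx, Real.sign_of_pos hx, one_mul, one_mul]
  split_ifs with h₁ h₂
  · have hL : L ≤ x - lam := by
      have := div_nonpos_of_nonpos_of_nonneg (by linarith : x - 2 * lam ≤ 0) ha₂.le
      linarith
    rw [max_eq_right (hL.trans (le_max_left _ _)), min_eq_right (max_le (by linarith) hx.le)]
  · have hL : x - lam ≤ L := by
      have := div_nonneg (by linarith : 0 ≤ x - 2 * lam) ha₂.le
      linarith
    have hLx : L ≤ x := by
      have := div_nonpos_of_nonpos_of_nonneg (by linarith : x - a * lam ≤ 0) ha₂.le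
      linarith
    rw [max_eq_left (max_le hL (by linarith)), min_eq_right hLx]
  · have hxL : x ≤ L := by
      have := div_nonneg (by linarith : 0 ≤ x - a * lam) ha₂.le
      linarith
    exact (min_eq_left (hxL.trans (le_max_left _ _))).symm

theorem abs_scadThresh_sub_self_le (hlam : 0 ≤ lam) (ha : 2 < a) (x : ℝ) :
    |scadThresh lam a x - x| ≤ lam := by
  wlog hx : 0 ≤ x generalizing x
  · have h := this (-x) (by linarith)
    rwa [scadThresh_odd, show -scadThresh lam a x - -x = -(scadThresh lam a x - x) by ring,
      abs_neg] at h
  rw [scadThresh_of_nonneg ha hx, abs_sub_le_iff]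
  constructor
  · linarith [min_le_left x (max (((a - 1) * x - a * lam) / (a - 2)) (max (x - lam) 0))]
  · have := le_min (by linarith : x - lam ≤ x)
      ((le_max_left (x - lam) 0).trans (le_max_right (((a - 1) * x - a * lam) / (a - 2)) _))
    linarith

theorem lipschitzWith_scadThresh (ha : 2 < a) :
    LipschitzWith (Real.toNNReal ((a - 1) / (a - 2))) (scadThresh lam a) := by
  set K := Real.toNNReal ((a - 1) / (a - 2))
  have ha₂ : 0 < a - 2 := by linarith
  have hK : 1 ≤ K := Real.one_le_toNNReal.2 ((one_le_div ha₂).2 (by linarith))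
  have h_id : LipschitzWith K fun x : ℝ => x := LipschitzWith.id.weaken hK
  have h_shift : LipschitzWith K fun x : ℝ => max (x - lam) 0 :=
    (LipschitzWith.of_dist_le_mul fun x y => by
      rw [dist_sub_right]; exact h_id.dist_le_mul x y).max_const 0
  have h_lin : LipschitzWith K fun x => ((a - 1) * x - a * lam) / (a - 2) :=
    LipschitzWith.of_dist_le' fun x y => by
      rw [Real.dist_eq, Real.dist_eq, show ((a - 1) * x - a * lam) / (a - 2)
        - ((a - 1) * y - a * lam) / (a - 2) = (a - 1) / (a - 2) * (x - y) by ring, abs_mul,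
        abs_of_pos (div_pos (by linarith) ha₂)]
  have h_formula := h_id.min (h_lin.max h_shift)
  simp only [max_self] at h_formula
  refine (scadThresh_odd lam a).lipschitzWith fun x hx y hy => ?_
  rw [scadThresh_of_nonneg ha hx, scadThresh_of_nonneg ha hy]
  exact h_formula x y

/-- For every `λ > 0` and `a > 2`, the SCAD thresholding function satisfies
(P1), (P2) with `K = (a−1)/(a−2)`, and (P3) with `B = 1`. -/
theorem stmt16 (lam a : ℝ) (hlam : 0 < lam) (ha : 2 < a) :
    (∀ x : ℝ, |x| ≤ lam → scadThresh lam a x = 0) ∧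
    (∀ x y : ℝ, |scadThresh lam a x - scadThresh lam a y| ≤ (a - 1) / (a - 2) * |x - y|) ∧
    (∀ x : ℝ, |scadThresh lam a x - x| ≤ 1 * lam) := by
  refine ⟨fun x => scadThresh_of_abs_le, fun x y => ?_,
    fun x => (one_mul lam).symm ▸ abs_scadThresh_sub_self_le hlam.le ha x⟩
  have hK : 0 ≤ (a - 1) / (a - 2) := div_nonneg (by linarith) (by linarith)
  simpa [Real.dist_eq, Real.coe_toNNReal _ hK] using
    (lipschitzWith_scadThresh (lam := lam) ha).dist_le_mul x y
end
end
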